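/- Let F be the 2×2 matrix with rows [θ₂(1-ρ)π₁/π₂, θ₁(1-ρ)π₁/(Cπ₂)] and [0, 0], and V the 2×2 matrix with rows [λ₁+π₂+π₃, 0] and [-η₂π₂/π₁, λ₃], where all parameters are positive and ρ < 1. Then V is invertible and the spectral radius of F·V⁻¹ equals (1-ρ)(Cπ₁λ₃θ₂ + π₂η₂θ₁) / (π₂(λ₁+π₂+π₃)Cλ₃). -/
import Mathlib

theorem basic_reproduction_number (π₁ π₂ π₃ lam₁ lam₃ θ₁ θ₂ η₂ C ρ : ℝ)
    (hπ₁ : 0 < π₁) (hπ₂ : 0 < π₂) (hπ₃ : 0 < π₃) (hlam₁ : 0 < lam₁) (hlam₃ : 0 < lam₃)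
    (hθ₁ : 0 < θ₁) (hθ₂ : 0 < θ₂) (hη₂ : 0 < η₂) (hC : 0 < C)
    (hρ0 : 0 ≤ ρ) (hρ : ρ < 1) :
    let F : Matrix (Fin 2) (Fin 2) ℝ :=
      !![θ₂ * (1 - ρ) * π₁ / π₂, θ₁ * (1 - ρ) * π₁ / (C * π₂); 0, 0]
    let V : Matrix (Fin 2) (Fin 2) ℝ :=
      !![lam₁ + π₂ + π₃, 0; -(η₂ * π₂ / π₁), lam₃]
    IsUnit V ∧
    IsGreatest {x : ℝ | ∃ μ ∈ spectrum ℝ (F * V⁻¹), x = |μ|}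
      ((1 - ρ) * (C * π₁ * lam₃ * θ₂ + π₂ * η₂ * θ₁) /
        (π₂ * (lam₁ + π₂ + π₃) * C * lam₃)) := by
  intro F V
  have h1ρ : 0 < 1 - ρ := by linarith
  have hSig : 0 < lam₁ + π₂ + π₃ := by positivity
  have hdet : V.det = (lam₁ + π₂ + π₃) * lam₃ := by
    simp [V, Matrix.det_fin_two_of]
  have hdet0 : V.det ≠ 0 := by rw [hdet]; positivity
  have hUnit : IsUnit V := by
    rw [Matrix.isUnit_iff_isUnit_det]; exact isUnit_iff_ne_zero.mpr hdet0
  refine ⟨hUnit, ?_⟩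
  set R := (1 - ρ) * (C * π₁ * lam₃ * θ₂ + π₂ * η₂ * θ₁) /
        (π₂ * (lam₁ + π₂ + π₃) * C * lam₃) with hRdef
  have hRpos : 0 < R := by rw [hRdef]; positivity
  have hVinv : V⁻¹ = !![1/(lam₁+π₂+π₃), 0;
      η₂*π₂/(π₁*(lam₁+π₂+π₃)*lam₃), 1/lam₃] := by
    apply Matrix.inv_eq_right_inv
    show V * _ = 1
    ext i j
    fin_cases i <;> fin_cases j <;>
      simp [V, Matrix.mul_apply, Fin.sum_univ_two, Matrix.one_apply] <;>
      try (field_simp [hSig.ne', hlam₃.ne', hπ₁.ne', hπ₂.ne', hC.ne']; try ring)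
  have hM : F * V⁻¹ = !![R, θ₁ * (1 - ρ) * π₁ / (C * π₂ * lam₃); 0, 0] := by
    rw [hVinv]
    show !![θ₂ * (1 - ρ) * π₁ / π₂, θ₁ * (1 - ρ) * π₁ / (C * π₂); 0, 0] * _ = _
    ext i j
    fin_cases i <;> fin_cases j <;>
      simp [Matrix.mul_apply, Fin.sum_univ_two, hRdef] <;>
      try (field_simp [hSig.ne', hlam₃.ne', hπ₁.ne', hπ₂.ne', hC.ne']; try ring)
  have halg : ∀ μ : ℝ, algebraMap ℝ (Matrix (Fin 2) (Fin 2) ℝ) μ = !![μ,0;0,μ] := by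
    intro μ
    ext i j
    fin_cases i <;> fin_cases j <;> simp [Matrix.algebraMap_matrix_apply]
  have hspec : spectrum ℝ (F * V⁻¹) = {R, 0} := by
    ext μ
    rw [spectrum.mem_iff, hM, halg, Matrix.isUnit_iff_isUnit_det, isUnit_iff_ne_zero, not_not]
    have hsub : (!![μ,0;0,μ] - !![R, θ₁ * (1 - ρ) * π₁ / (C * π₂ * lam₃); 0, 0]) =
        !![μ - R, -(θ₁ * (1 - ρ) * π₁ / (C * π₂ * lam₃)); 0, μ] := by
      ext i j
      fin_cases i <;> fin_cases j <;> simp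
    rw [hsub, Matrix.det_fin_two_of]
    constructor
    · intro h
      have h' : (μ - R) * μ = 0 := by linarith [h]
      rcases mul_eq_zero.mp h' with h''|h''
      · left; show μ = R; linarith
      · right; exact h''
    · rintro (h|h) <;> simp_all
  constructor
  · exact ⟨R, by rw [hspec]; left; rfl, (abs_of_pos hRpos).symm⟩
  · rintro x ⟨μ, hμ, rfl⟩
    rw [hspec] at hμ
    rcases hμ with h|h <;> subst h
    · exact le_of_eq (abs_of_pos hRpos)
    · simpa using le_of_lt hRpos
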